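/- For every γ ∈ (0,1) and every norm ‖·‖_c on ℝ^d (with l_cs, u_cs the norm-equivalence constants to ‖·‖₂) there exist η > 0 and ᾱ ∈ (0,1) such that: for every operator T : ℝ^d → ℝ^d that is γ-contractive with respect to ‖·‖_c with fixed point θ*, every stepsize α ∈ (0, ᾱ], and every θ, w ∈ ℝ^d, the generalized Moreau envelope M_η satisfies M_η( (1−α)(θ − θ*) + α(T(θ) − T(θ*) + w) ) ≤ (1 − α(1 − √γ)) M_η(θ − θ*) + (1−α)α ⟨∇M_η(θ − θ*), w⟩ + (α²/(η l_cs²)) ‖w‖_c². -/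

import Mathlib

open MeasureTheory

open Topology Filter

noncomputable section

/-- A function on `ℝ^d` satisfying the axioms of a norm. -/
structure IsNormLike {V : Type*} [AddCommGroup V] [Module ℝ V] (c : V → ℝ) : Prop where
  add_le : ∀ x y, c (x + y) ≤ c x + c y
  smul_eq : ∀ (r : ℝ) (x : V), c (r • x) = |r| * c x
  pos : ∀ x, x ≠ 0 → 0 < c x

/-- The generalized Moreau envelope of `(1/2) (c ·)²` with respect to `(1/2)‖·‖₂²`. -/
def moreau {d : ℕ} (c : EuclideanSpace ℝ (Fin d) → ℝ) (η : ℝ)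
    (x : EuclideanSpace ℝ (Fin d)) : ℝ :=
  ⨅ u : EuclideanSpace ℝ (Fin d), ((c u) ^ 2 / 2 + ‖x - u‖ ^ 2 / (2 * η))

variable {d : ℕ} {c : EuclideanSpace ℝ (Fin d) → ℝ} (hc : IsNormLike c)

lemma c_zero (hc : IsNormLike c) : c 0 = 0 := by
  have := hc.smul_eq 0 0; simpa using this

lemma c_nonneg (hc : IsNormLike c) (x : EuclideanSpace ℝ (Fin d)) : 0 ≤ c x := by
  rcases eq_or_ne x 0 with h | h
  · simp [h, c_zero hc]
  · exact (hc.pos x h).le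

lemma c_neg (hc : IsNormLike c) (x : EuclideanSpace ℝ (Fin d)) : c (-x) = c x := by
  have := hc.smul_eq (-1) x; simpa using this

lemma c_sub_le (hc : IsNormLike c) (x y : EuclideanSpace ℝ (Fin d)) :
    c x - c y ≤ c (x - y) := by
  have := hc.add_le (x - y) y
  simp only [sub_add_cancel] at this
  linarith

lemma F_nonneg {η : ℝ} (hη : 0 < η) (x u : EuclideanSpace ℝ (Fin d)) :
    0 ≤ (c u) ^ 2 / 2 + ‖x - u‖ ^ 2 / (2 * η) := by
  have h1 : (0:ℝ) ≤ (c u)^2 := sq_nonneg _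
  have h2 : (0:ℝ) ≤ ‖x - u‖^2 := sq_nonneg _
  have : (0:ℝ) < 2 * η := by linarith
  positivity

lemma moreau_bdd {η : ℝ} (hη : 0 < η) (x : EuclideanSpace ℝ (Fin d)) :
    BddBelow (Set.range fun u => (c u) ^ 2 / 2 + ‖x - u‖ ^ 2 / (2 * η)) :=
  ⟨0, by rintro y ⟨u, rfl⟩; exact F_nonneg hη x u⟩

lemma moreau_le {η : ℝ} (hη : 0 < η) (x u : EuclideanSpace ℝ (Fin d)) :
    moreau c η x ≤ (c u) ^ 2 / 2 + ‖x - u‖ ^ 2 / (2 * η) :=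
  ciInf_le (moreau_bdd hη x) u

lemma le_moreau {η : ℝ} {b : ℝ} {x : EuclideanSpace ℝ (Fin d)}
    (h : ∀ u, b ≤ (c u) ^ 2 / 2 + ‖x - u‖ ^ 2 / (2 * η)) : b ≤ moreau c η x :=
  le_ciInf h

lemma moreau_nonneg {η : ℝ} (hη : 0 < η) (x : EuclideanSpace ℝ (Fin d)) :
    0 ≤ moreau c η x := le_moreau fun u => F_nonneg hη x u

lemma moreau_le_csq {η : ℝ} (hη : 0 < η) (x : EuclideanSpace ℝ (Fin d)) :
    moreau c η x ≤ (c x)^2 / 2 := by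
  have := moreau_le (c := c) hη x x
  simpa using this

lemma moreau_le_normsq {η : ℝ} (hη : 0 < η) (hc : IsNormLike c)
    (x : EuclideanSpace ℝ (Fin d)) :
    moreau c η x ≤ ‖x‖^2 / (2*η) := by
  have := moreau_le (c := c) hη x 0
  simpa [c_zero hc] using this

lemma moreau_smul_le {η : ℝ} (hη : 0 < η) (hc : IsNormLike c) {s : ℝ} (hs : 0 < s)
    (x : EuclideanSpace ℝ (Fin d)) :
    moreau c η (s • x) ≤ s^2 * moreau c η x := by
  rw [mul_comm, ← div_le_iff₀ (by positivity)]
  apply le_moreau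
  intro u
  rw [div_le_iff₀ (by positivity)]
  have h := moreau_le (c := c) hη (s • x) (s • u)
  have hcs : c (s • u) = s * c u := by rw [hc.smul_eq, abs_of_pos hs]
  have hns : ‖s • x - s • u‖ = s * ‖x - u‖ := by
    rw [← smul_sub, norm_smul, Real.norm_eq_abs, abs_of_pos hs]
  rw [hcs, hns] at h
  calc moreau c η (s • x) ≤ (s * c u)^2/2 + (s * ‖x - u‖)^2/(2*η) := h
    _ = ((c u)^2/2 + ‖x - u‖^2/(2*η)) * s^2 := by ring

lemma moreau_smul {η : ℝ} (hη : 0 < η) (hc : IsNormLike c) {s : ℝ} (hs : 0 < s)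
    (x : EuclideanSpace ℝ (Fin d)) :
    moreau c η (s • x) = s^2 * moreau c η x := by
  refine le_antisymm (moreau_smul_le hη hc hs x) ?_
  have h := moreau_smul_le hη hc (s := s⁻¹) (by positivity) (s • x)
  rw [smul_smul, inv_mul_cancel₀ hs.ne', one_smul] at h
  calc s^2 * moreau c η x ≤ s^2 * (s⁻¹^2 * moreau c η (s • x)) := by
        apply mul_le_mul_of_nonneg_left h (by positivity)
    _ = moreau c η (s • x) := by field_simp

lemma sq_convex {p q l : ℝ} (hp : 0 ≤ p) (hq : 0 ≤ q) (hl : 0 ≤ l) (hl1 : l ≤ 1) :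
    (l * p + (1 - l) * q)^2 ≤ l * p^2 + (1 - l) * q^2 := by
  nlinarith [sq_nonneg (p - q), mul_nonneg hl (sub_nonneg.2 hl1)]

lemma moreau_convex {η : ℝ} (hη : 0 < η) (hc : IsNormLike c) {l : ℝ}
    (hl : 0 < l) (hl1 : l < 1) (a b : EuclideanSpace ℝ (Fin d)) :
    moreau c η (l • a + (1 - l) • b) ≤ l * moreau c η a + (1 - l) * moreau c η b := by
  have key : ∀ u v : EuclideanSpace ℝ (Fin d),
      moreau c η (l • a + (1 - l) • b) ≤
        l * ((c u)^2/2 + ‖a - u‖^2/(2*η)) + (1 - l) * ((c v)^2/2 + ‖b - v‖^2/(2*η)) := by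
    intro u v
    have h := moreau_le (c := c) hη (l • a + (1 - l) • b) (l • u + (1 - l) • v)
    have hc1 : c (l • u + (1 - l) • v) ≤ l * c u + (1 - l) * c v := by
      calc c (l • u + (1 - l) • v) ≤ c (l • u) + c ((1 - l) • v) := hc.add_le _ _
        _ = l * c u + (1 - l) * c v := by
            rw [hc.smul_eq, hc.smul_eq, abs_of_pos hl, abs_of_pos (by linarith)]
    have hc2 : (c (l • u + (1 - l) • v))^2 ≤ l * (c u)^2 + (1 - l) * (c v)^2 := by
      calc (c (l • u + (1 - l) • v))^2 ≤ (l * c u + (1 - l) * c v)^2 := by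
            apply sq_le_sq' _ hc1
            have := c_nonneg hc (l • u + (1 - l) • v)
            have h1 := c_nonneg hc u; have h2 := c_nonneg hc v
            nlinarith
        _ ≤ l * (c u)^2 + (1 - l) * (c v)^2 :=
            sq_convex (c_nonneg hc u) (c_nonneg hc v) hl.le hl1.le
    have hn1 : ‖(l • a + (1 - l) • b) - (l • u + (1 - l) • v)‖ ≤
        l * ‖a - u‖ + (1 - l) * ‖b - v‖ := by
      have : (l • a + (1 - l) • b) - (l • u + (1 - l) • v)
          = l • (a - u) + (1 - l) • (b - v) := by
        simp [smul_sub]; abel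
      rw [this]
      calc ‖l • (a - u) + (1 - l) • (b - v)‖ ≤ ‖l • (a - u)‖ + ‖(1 - l) • (b - v)‖ :=
            norm_add_le _ _
        _ = l * ‖a - u‖ + (1 - l) * ‖b - v‖ := by
            rw [norm_smul, norm_smul, Real.norm_eq_abs, Real.norm_eq_abs,
              abs_of_pos hl, abs_of_pos (by linarith)]
    have hn2 : ‖(l • a + (1 - l) • b) - (l • u + (1 - l) • v)‖^2 ≤
        l * ‖a - u‖^2 + (1 - l) * ‖b - v‖^2 := by
      calc ‖(l • a + (1 - l) • b) - (l • u + (1 - l) • v)‖^2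
          ≤ (l * ‖a - u‖ + (1 - l) * ‖b - v‖)^2 := by
            apply sq_le_sq' _ hn1
            have := norm_nonneg ((l • a + (1 - l) • b) - (l • u + (1 - l) • v))
            have h1 := norm_nonneg (a - u); have h2 := norm_nonneg (b - v)
            nlinarith
        _ ≤ l * ‖a - u‖^2 + (1 - l) * ‖b - v‖^2 :=
            sq_convex (norm_nonneg _) (norm_nonneg _) hl.le hl1.le
    calc moreau c η (l • a + (1 - l) • b)
        ≤ (c (l • u + (1 - l) • v))^2/2 + ‖(l • a + (1-l) • b) - (l • u + (1-l) • v)‖^2/(2*η) := h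
      _ ≤ (l * (c u)^2 + (1 - l) * (c v)^2)/2
          + (l * ‖a - u‖^2 + (1 - l) * ‖b - v‖^2)/(2*η) := by
          have h2η : (0:ℝ) < 2*η := by linarith
          apply add_le_add (by linarith [hc2]) (div_le_div_of_nonneg_right hn2 h2η.le)
      _ = l * ((c u)^2/2 + ‖a - u‖^2/(2*η)) + (1 - l) * ((c v)^2/2 + ‖b - v‖^2/(2*η)) := by
          ring
  -- now take infima
  have step1 : ∀ u, moreau c η (l • a + (1 - l) • b) - l * ((c u)^2/2 + ‖a - u‖^2/(2*η))
      ≤ (1 - l) * moreau c η b := by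
    intro u
    have h1l : (0:ℝ) < 1 - l := by linarith
    have hd : (moreau c η (l • a + (1 - l) • b) - l * ((c u)^2/2 + ‖a - u‖^2/(2*η))) / (1 - l)
        ≤ moreau c η b := by
      apply le_moreau
      intro v
      rw [div_le_iff₀ h1l]
      nlinarith [key u v]
    have := (div_le_iff₀ h1l).mp hd
    nlinarith
  have step2 : (moreau c η (l • a + (1 - l) • b) - (1 - l) * moreau c η b) / l ≤ moreau c η a := by
    apply le_moreau
    intro u
    rw [div_le_iff₀ hl]
    nlinarith [step1 u]
  have := (div_le_iff₀ hl).mp step2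
  nlinarith

lemma csq_le_moreau {η ucs : ℝ} (hη : 0 < η) (hucs : 0 < ucs) (hc : IsNormLike c)
    (hupp : ∀ x, c x ≤ ucs * ‖x‖) (x : EuclideanSpace ℝ (Fin d)) :
    (c x)^2 ≤ 2 * (1 + η * ucs^2) * moreau c η x := by
  have hκ : 0 < η * ucs^2 := by positivity
  rw [show 2 * (1 + η * ucs^2) * moreau c η x = moreau c η x * (2*(1+η*ucs^2)) by ring,
    ← div_le_iff₀ (by positivity)]
  apply le_moreau
  intro u
  have htri : c x ≤ c u + c (x - u) := by
    have := hc.add_le u (x - u); simpa [add_sub_cancel] using this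
  have hub : c (x - u) ≤ ucs * ‖x - u‖ := hupp _
  have h1 : c x ≤ c u + ucs * ‖x - u‖ := by linarith
  have ha := c_nonneg hc u
  have hb := norm_nonneg (x - u)
  have hs := c_nonneg hc x
  rw [div_le_iff₀ (by positivity)]
  have h1sq : (c x)^2 ≤ (c u + ucs*‖x - u‖)^2 := by nlinarith
  have P : η * (c x)^2 ≤ (η*(c u)^2 + ‖x - u‖^2) * (1+η*ucs^2) := by
    nlinarith [sq_nonneg (‖x - u‖ - η*ucs*(c u)), mul_le_mul_of_nonneg_left h1sq hη.le]
  have expand : ((c u)^2/2 + ‖x - u‖^2/(2*η))*(2*(1+η*ucs^2))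
      = (η*(c u)^2 + ‖x - u‖^2)*(1+η*ucs^2)/η := by field_simp
  rw [expand, le_div_iff₀ hη]
  linarith

lemma c_continuous {ucs : ℝ} (hc : IsNormLike c) (hucs : 0 < ucs)
    (hupp : ∀ x, c x ≤ ucs * ‖x‖) : Continuous c := by
  have : LipschitzWith ⟨ucs, hucs.le⟩ c := by
    apply LipschitzWith.of_dist_le_mul
    intro a b
    rw [Real.dist_eq, dist_eq_norm]
    rw [abs_sub_le_iff]
    constructor
    · exact (c_sub_le hc a b).trans (hupp _)
    · calc c b - c a ≤ c (b - a) := c_sub_le hc b a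
        _ ≤ ucs * ‖b - a‖ := hupp _
        _ = ucs * ‖a - b‖ := by rw [norm_sub_rev]
  exact this.continuous

lemma moreau_exists_min {η ucs : ℝ} (hη : 0 < η) (hucs : 0 < ucs) (hc : IsNormLike c)
    (hupp : ∀ x, c x ≤ ucs * ‖x‖) (x : EuclideanSpace ℝ (Fin d)) :
    ∃ p, moreau c η x = (c p)^2/2 + ‖x - p‖^2/(2*η) := by
  set F : EuclideanSpace ℝ (Fin d) → ℝ := fun u => (c u)^2/2 + ‖x - u‖^2/(2*η) with hF
  have hcont : Continuous F := by
    apply Continuous.add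
    · exact (((c_continuous hc hucs hupp).pow 2).div_const 2)
    · exact ((continuous_const.sub continuous_id).norm.pow 2).div_const _
  set K : ℝ := F x
  set R : ℝ := Real.sqrt (2*η*K) + 1 with hR
  have hK : 0 ≤ 2*η*K := by
    have : 0 ≤ K := F_nonneg hη x x
    positivity
  have hball : ∃ p ∈ Metric.closedBall x R, ∀ u ∈ Metric.closedBall x R, F p ≤ F u := by
    have hcpt : IsCompact (Metric.closedBall x R) := isCompact_closedBall x R
    have hne : (Metric.closedBall x R).Nonempty :=
      ⟨x, Metric.mem_closedBall_self (by positivity)⟩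
    obtain ⟨p, hp, hmin⟩ := hcpt.exists_isMinOn hne hcont.continuousOn
    exact ⟨p, hp, fun u hu => hmin hu⟩
  obtain ⟨p, hp, hmin⟩ := hball
  have hglobal : ∀ u, F p ≤ F u := by
    intro u
    by_cases hu : u ∈ Metric.closedBall x R
    · exact hmin u hu
    · have hd : R < dist u x := by
        simp only [Metric.mem_closedBall] at hu; linarith [not_le.mp hu]
      have hFu : K < F u := by
        have h1 : ‖x - u‖ = dist u x := by rw [dist_eq_norm, norm_sub_rev]
        have h2 : Real.sqrt (2*η*K) < ‖x - u‖ := by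
          rw [h1]
          have hs' : Real.sqrt (2*η*K) = R - 1 := by rw [hR]; ring
          linarith
        have h3 : 2*η*K < ‖x - u‖^2 := by
          have := Real.sq_sqrt hK
          nlinarith [Real.sqrt_nonneg (2*η*K), norm_nonneg (x - u)]
        have : K < ‖x - u‖^2/(2*η) := by
          rw [lt_div_iff₀ (by positivity)]; linarith [h3]
        have hcp : 0 ≤ (c u)^2/2 := by positivity
        calc K < ‖x - u‖^2/(2*η) := this
          _ ≤ F u := by simp only [hF]; linarith
      have hFpK : F p ≤ K := hmin x (Metric.mem_closedBall_self (by positivity))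
      linarith
  refine ⟨p, le_antisymm (moreau_le hη x p) (le_moreau hglobal)⟩

lemma moreau_upper_bound {η : ℝ} (hη : 0 < η)
    {x p : EuclideanSpace ℝ (Fin d)} (hp : moreau c η x = (c p)^2/2 + ‖x - p‖^2/(2*η))
    (y : EuclideanSpace ℝ (Fin d)) :
    moreau c η y ≤ moreau c η x + @inner ℝ _ _ (η⁻¹ • (x - p)) (y - x) + ‖y - x‖^2/(2*η) := by
  have h1 : moreau c η y ≤ (c p)^2/2 + ‖y - p‖^2/(2*η) := moreau_le hη y p
  have h2 : ‖y - p‖^2 = ‖y - x‖^2 + 2 * @inner ℝ _ _ (y - x) (x - p) + ‖x - p‖^2 := by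
    have : y - p = (y - x) + (x - p) := by abel
    rw [this, @norm_add_sq_real]
  have h3 : @inner ℝ _ _ (η⁻¹ • (x - p)) (y - x) = η⁻¹ * @inner ℝ _ _ (y - x) (x - p) := by
    rw [real_inner_smul_left, real_inner_comm]
  rw [h3]
  have hinv : η⁻¹ * @inner ℝ _ _ (y - x) (x - p) = 2 * @inner ℝ _ _ (y - x) (x - p) / (2*η) := by
    generalize @inner ℝ _ _ (y - x) (x - p) = I
    field_simp
  rw [hp, hinv]
  rw [h2] at h1
  have h2η : (0:ℝ) < 2*η := by linarith
  calc moreau c η y ≤ (c p)^2/2 + (‖y - x‖^2 + 2 * @inner ℝ _ _ (y - x) (x - p) + ‖x - p‖^2)/(2*η) := h1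
    _ = (c p)^2/2 + ‖x - p‖^2/(2*η) + 2 * @inner ℝ _ _ (y - x) (x - p)/(2*η) + ‖y - x‖^2/(2*η) := by
        generalize @inner ℝ _ _ (y - x) (x - p) = I
        field_simp; ring

lemma moreau_lower_bound {η ucs : ℝ} (hη : 0 < η) (hucs : 0 < ucs) (hc : IsNormLike c)
    (hupp : ∀ x, c x ≤ ucs * ‖x‖)
    {x p : EuclideanSpace ℝ (Fin d)} (hp : moreau c η x = (c p)^2/2 + ‖x - p‖^2/(2*η))
    (y : EuclideanSpace ℝ (Fin d)) :
    moreau c η x + @inner ℝ _ _ (η⁻¹ • (x - p)) (y - x) ≤ moreau c η y := by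
  set g := η⁻¹ • (x - p) with hg
  set K := ‖y - x‖^2/(2*η) with hK
  have hKnn : 0 ≤ K := by positivity
  have key : ∀ t : ℝ, 0 < t → t < 1 →
      moreau c η x + @inner ℝ _ _ g (y - x) ≤ moreau c η y + t * K := by
    intro t ht ht1
    have hA : moreau c η (t • y + (1 - t) • x) ≤ t * moreau c η y + (1 - t) * moreau c η x :=
      moreau_convex hη hc ht ht1 y x
    have hBpt : (x - t • (y - x)) - x = -(t • (y - x)) := by abel
    have hB : moreau c η (x - t • (y - x)) ≤
        moreau c η x + @inner ℝ _ _ g (-(t • (y - x))) + ‖-(t • (y - x))‖^2/(2*η) := by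
      have := moreau_upper_bound hη hp (x - t • (y - x))
      rwa [hBpt] at this
    have hBinner : @inner ℝ _ _ g (-(t • (y - x))) = -t * @inner ℝ _ _ g (y - x) := by
      rw [inner_neg_right, real_inner_smul_right]; ring
    have hBnorm : ‖-(t • (y - x))‖^2/(2*η) = t^2 * K := by
      rw [norm_neg, norm_smul, Real.norm_eq_abs, abs_of_pos ht, hK, mul_pow]
      field_simp
    rw [hBinner, hBnorm] at hB
    have hmid : (1/2 : ℝ) • (t • y + (1 - t) • x) + (1 - 1/2 : ℝ) • (x - t • (y - x)) = x := by
      module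
    have hx : moreau c η x ≤
        (1/2) * moreau c η (t • y + (1 - t) • x) + (1 - 1/2) * moreau c η (x - t • (y - x)) := by
      have := moreau_convex hη hc (l := 1/2) (by norm_num) (by norm_num)
        (t • y + (1 - t) • x) (x - t • (y - x))
      rwa [hmid] at this
    have ht2 : t^2 ≤ t := by nlinarith
    nlinarith [hA, hB, hx, mul_le_mul_of_nonneg_right ht2 hKnn]
  have : ∀ ε : ℝ, 0 < ε →
      moreau c η x + @inner ℝ _ _ g (y - x) ≤ moreau c η y + ε := by
    intro ε hε
    set t := min (1/2) (ε / (K + 1)) with htdef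
    have ht : 0 < t := lt_min (by norm_num) (by positivity)
    have ht1 : t < 1 := lt_of_le_of_lt (min_le_left _ _) (by norm_num)
    have htK : t * K ≤ ε := by
      have h1 : t ≤ ε / (K + 1) := min_le_right _ _
      calc t * K ≤ (ε / (K+1)) * K := mul_le_mul_of_nonneg_right h1 hKnn
        _ ≤ (ε / (K+1)) * (K+1) := by
            apply mul_le_mul_of_nonneg_left (by linarith) (by positivity)
        _ = ε := by field_simp
    linarith [key t ht ht1]
  exact le_of_forall_pos_le_add this

lemma moreau_hasGradient {η ucs : ℝ} (hη : 0 < η) (hucs : 0 < ucs) (hc : IsNormLike c)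
    (hupp : ∀ x, c x ≤ ucs * ‖x‖)
    {x p : EuclideanSpace ℝ (Fin d)} (hp : moreau c η x = (c p)^2/2 + ‖x - p‖^2/(2*η)) :
    HasGradientAt (moreau c η) (η⁻¹ • (x - p)) x := by
  set g := η⁻¹ • (x - p) with hg
  rw [hasGradientAt_iff_hasFDerivAt]
  rw [hasFDerivAt_iff_isLittleO_nhds_zero]
  rw [Asymptotics.isLittleO_iff]
  intro ε hε
  have hball : Metric.ball (0 : EuclideanSpace ℝ (Fin d)) (2*η*ε) ∈ 𝓝 (0 : EuclideanSpace ℝ (Fin d)) :=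
    Metric.ball_mem_nhds _ (by positivity)
  filter_upwards [hball] with h hh
  rw [mem_ball_zero_iff] at hh
  have hxh : (x + h) - x = h := by abel
  have hup := moreau_upper_bound hη hp (x + h)
  have hlo := moreau_lower_bound hη hucs hc hupp hp (x + h)
  rw [hxh] at hup hlo
  have habs : |moreau c η (x + h) - moreau c η x - @inner ℝ _ _ g h| ≤ ‖h‖^2/(2*η) := by
    rw [abs_le]
    constructor
    · have : (0:ℝ) ≤ ‖h‖^2/(2*η) := by positivity
      linarith
    · linarith
  have hd : (InnerProductSpace.toDual ℝ (EuclideanSpace ℝ (Fin d)) g) h = @inner ℝ _ _ g h := rfl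
  rw [Real.norm_eq_abs, hd]
  calc |moreau c η (x + h) - moreau c η x - @inner ℝ _ _ g h| ≤ ‖h‖^2/(2*η) := habs
    _ = ‖h‖ * ‖h‖ / (2*η) := by ring
    _ ≤ (2*η*ε) * ‖h‖ / (2*η) := by
        apply div_le_div_of_nonneg_right _ (by positivity)
        exact mul_le_mul_of_nonneg_right hh.le (norm_nonneg h)
    _ = ε * ‖h‖ := by field_simp

set_option maxHeartbeats 1000000 in
theorem stmt_1 {d : ℕ} (γ : ℝ) (hγ : γ ∈ Set.Ioo (0:ℝ) 1)
    (c : EuclideanSpace ℝ (Fin d) → ℝ) (hc : IsNormLike c)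
    (lcs ucs : ℝ) (hlcs : 0 < lcs) (hucs : 0 < ucs)
    (hlow : ∀ x, lcs * ‖x‖ ≤ c x) (hupp : ∀ x, c x ≤ ucs * ‖x‖) :
    ∃ η > 0, ∃ ᾱ ∈ Set.Ioo (0:ℝ) 1,
      ∀ T : EuclideanSpace ℝ (Fin d) → EuclideanSpace ℝ (Fin d),
        (∀ θ θ', c (T θ - T θ') ≤ γ * c (θ - θ')) →
        ∀ θstar : EuclideanSpace ℝ (Fin d), T θstar = θstar →
        ∀ α ∈ Set.Ioc (0:ℝ) ᾱ, ∀ θ w : EuclideanSpace ℝ (Fin d),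
          moreau c η ((1 - α) • (θ - θstar) + α • (T θ - T θstar + w)) ≤
            (1 - α * (1 - Real.sqrt γ)) * moreau c η (θ - θstar)
            + (1 - α) * α * @inner ℝ _ _ (gradient (moreau c η) (θ - θstar)) w
            + α ^ 2 / (η * lcs ^ 2) * (c w) ^ 2 := by
  obtain ⟨hγ0, hγ1⟩ := hγ
  set s := Real.sqrt γ with hs
  have hs0 : 0 < s := Real.sqrt_pos.2 hγ0
  have hs1 : s < 1 := by
    rw [hs, show (1:ℝ) = Real.sqrt 1 by simp]
    exact Real.sqrt_lt_sqrt hγ0.le hγ1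
  have hss : s * s = γ := Real.mul_self_sqrt hγ0.le
  obtain ⟨η, hη, hηucs⟩ : ∃ η : ℝ, 0 < η ∧ 1 + η * ucs^2 = 1/s := by
    refine ⟨(1/s - 1)/ucs^2, ?_, by field_simp; ring⟩
    apply div_pos _ (by positivity)
    rw [lt_sub_iff_add_lt, zero_add, lt_div_iff₀ hs0, one_mul]
    exact hs1
  obtain ⟨ᾱ, hᾱ0, hᾱ1, hᾱ2, hᾱ3⟩ :
      ∃ a : ℝ, 0 < a ∧ a < 1 ∧ a ≤ 1/2 ∧ a ≤ (1 - γ)/γ := by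
    refine ⟨min (1/2 : ℝ) ((1 - γ)/γ), lt_min (by norm_num) (div_pos (by linarith) hγ0),
      lt_of_le_of_lt (min_le_left _ _) (by norm_num), min_le_left _ _, min_le_right _ _⟩
  refine ⟨η, hη, ᾱ, ⟨hᾱ0, hᾱ1⟩, ?_⟩
  intro T hT θstar hθstar α hα θ w
  obtain ⟨hα0, hαᾱ⟩ := hα
  have hα2 : α ≤ 1/2 := hαᾱ.trans hᾱ2
  have hαγ : α ≤ (1 - γ)/γ := hαᾱ.trans hᾱ3
  set x := θ - θstar with hx
  set v := T θ - T θstar with hv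
  have hcv : c v ≤ γ * c x := hT θ θstar
  -- gradient
  obtain ⟨p, hp⟩ := moreau_exists_min hη hucs hc hupp x
  set g := η⁻¹ • (x - p) with hg
  have hgrad : gradient (moreau c η) x = g :=
    (moreau_hasGradient hη hucs hc hupp hp).gradient
  rw [hgrad]
  set Mx := moreau c η x with hMx
  set Mv := moreau c η v with hMv
  set Mw := moreau c η w with hMw
  set I := @inner ℝ _ _ g w with hI
  set Q := (c w)^2/(2*η*lcs^2) with hQ
  have hMx0 : 0 ≤ Mx := moreau_nonneg hη x
  have hQ0 : 0 ≤ Q := by positivity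
  -- step 1 : convexity split
  have hpt : (1-α) • (x + α • w) + (1 - (1-α)) • (v + α • w)
      = (1 - α) • x + α • (v + w) := by module
  have hMz : moreau c η ((1 - α) • x + α • (v + w)) ≤
      (1-α) * moreau c η (x + α • w) + α * moreau c η (v + α • w) := by
    have h := moreau_convex hη hc (l := 1-α) (by linarith) (by linarith)
      (x + α • w) (v + α • w)
    rw [hpt] at h
    have e : (1 - (1-α) : ℝ) = α := by ring
    rwa [e] at h
  -- step 2 : smoothness
  have hw2 : lcs^2 * ‖w‖^2 ≤ (c w)^2 := by
    have h := mul_le_mul (hlow w) (hlow w) (by positivity) (c_nonneg hc w)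
    nlinarith [h]
  have hw3 : ‖w‖^2/(2*η) ≤ (c w)^2/(2*η*lcs^2) := by
    rw [div_le_div_iff₀ (by positivity) (by positivity)]
    nlinarith [mul_le_mul_of_nonneg_left hw2 (le_of_lt (by positivity : (0:ℝ) < 2*η))]
  have h2 : moreau c η (x + α • w) ≤ Mx + α * I + α^2 * Q := by
    have h := moreau_upper_bound hη hp (x + α • w)
    have e1 : x + α • w - x = α • w := by abel
    rw [e1] at h
    have e2 : @inner ℝ _ _ g (α • w) = α * I := real_inner_smul_right g w α
    have e3 : ‖α • w‖^2 = α^2 * ‖w‖^2 := by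
      rw [norm_smul, Real.norm_eq_abs, mul_pow, sq_abs]
    rw [e2, e3] at h
    have e4 : α^2 * ‖w‖^2/(2*η) ≤ α^2 * Q := by
      rw [hQ]
      calc α^2 * ‖w‖^2/(2*η) = α^2 * (‖w‖^2/(2*η)) := by ring
        _ ≤ α^2 * ((c w)^2/(2*η*lcs^2)) := by
            apply mul_le_mul_of_nonneg_left hw3 (by positivity)
    linarith
  -- step 3 : convexity for v + αw
  have hβ : (0:ℝ) < 1 + α := by linarith
  have h3 : moreau c η (v + α • w) ≤ (1+α) * Mv + α*(1+α) * Mw := by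
    have hl : (0:ℝ) < 1/(1+α) := by positivity
    have hl1 : 1/(1+α) < 1 := by
      rw [div_lt_iff₀ hβ]; linarith
    have h := moreau_convex hη hc hl hl1 ((1+α) • v) ((1+α) • w)
    have e1 : (1/(1+α)) • ((1+α) • v) + (1 - 1/(1+α)) • ((1+α) • w) = v + α • w := by
      rw [smul_smul, smul_smul]
      have q1 : (1/(1+α)) * (1+α) = 1 := by field_simp
      have q2 : (1 - 1/(1+α)) * (1+α) = α := by field_simp; ring
      rw [q1, q2, one_smul]
    rw [e1, moreau_smul hη hc hβ, moreau_smul hη hc hβ] at h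
    have q3 : 1/(1+α) * ((1+α)^2 * moreau c η v) = (1+α) * Mv := by
      rw [← hMv]; field_simp
    have q4 : (1 - 1/(1+α)) * ((1+α)^2 * moreau c η w) = α*(1+α) * Mw := by
      rw [← hMw]; field_simp; ring
    rw [q3, q4] at h
    exact h
  -- step 4 : contraction bound
  set C := γ^2 * (1 + η*ucs^2) with hC
  have h4 : Mv ≤ C * Mx := by
    have ha : Mv ≤ (c v)^2/2 := moreau_le_csq hη v
    have hb : (c v)^2 ≤ γ^2 * (c x)^2 := by
      nlinarith [c_nonneg hc v, c_nonneg hc x, hcv]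
    have hcx : (c x)^2 ≤ 2 * (1 + η*ucs^2) * Mx := csq_le_moreau hη hucs hc hupp x
    nlinarith [mul_le_mul_of_nonneg_left hcx (by positivity : (0:ℝ) ≤ γ^2/2)]
  -- step 5 : noise bound
  have h5 : Mw ≤ Q := by
    have ha : Mw ≤ ‖w‖^2/(2*η) := moreau_le_normsq hη hc w
    rw [hQ]
    linarith [hw3]
  -- step 6 : coefficient bound
  have hγα : (1+α) * C ≤ s := by
    rw [hC, hηucs]
    have h0 : α * γ ≤ 1 - γ := by
      rw [le_div_iff₀ hγ0] at hαγ; linarith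
    have h1 : (1+α) * γ ≤ 1 := by
      have e : (1+α) * γ = γ + α * γ := by ring
      linarith [e.le]
    have h2' : (1+α) * γ^2 ≤ γ := by
      calc (1+α) * γ^2 = ((1+α)*γ)*γ := by ring
        _ ≤ 1*γ := mul_le_mul_of_nonneg_right h1 hγ0.le
        _ = γ := one_mul γ
    rw [show (1+α) * (γ^2 * (1/s)) = ((1+α) * γ^2)/s by ring, div_le_iff₀ hs0]
    calc (1+α) * γ^2 ≤ γ := h2'
      _ = s * s := hss.symm
  -- final assembly
  have key : moreau c η ((1 - α) • x + α • (v + w)) ≤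
      (1 - α*(1-s)) * Mx + (1-α)*α*I + 2*α^2*Q := by
    calc moreau c η ((1 - α) • x + α • (v + w))
        ≤ (1-α) * moreau c η (x + α • w) + α * moreau c η (v + α • w) := hMz
      _ ≤ (1-α) * (Mx + α * I + α^2 * Q) + α * ((1+α) * Mv + α*(1+α) * Mw) := by
          apply add_le_add
          · exact mul_le_mul_of_nonneg_left h2 (by linarith)
          · exact mul_le_mul_of_nonneg_left h3 hα0.le
      _ ≤ (1-α) * (Mx + α * I + α^2 * Q) + α * ((1+α) * (C * Mx) + α*(1+α) * Q) := by
          have t1 : (1+α) * Mv ≤ (1+α) * (C * Mx) := mul_le_mul_of_nonneg_left h4 hβ.le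
          have t2 : α*(1+α) * Mw ≤ α*(1+α) * Q :=
            mul_le_mul_of_nonneg_left h5 (by positivity)
          have := mul_le_mul_of_nonneg_left (add_le_add t1 t2) hα0.le
          linarith
      _ = (1-α) * Mx + (1-α)*α*I + (α * ((1+α) * C)) * Mx
            + ((1-α)*α^2 + α^2*(1+α)) * Q := by ring
      _ ≤ (1-α) * Mx + (1-α)*α*I + (α * s) * Mx + 2*α^2*Q := by
          have t3 : α * ((1+α) * C) ≤ α * s := mul_le_mul_of_nonneg_left hγα hα0.le
          have t4 : (α * ((1+α) * C)) * Mx ≤ (α * s) * Mx :=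
            mul_le_mul_of_nonneg_right t3 hMx0
          have t5 : ((1-α)*α^2 + α^2*(1+α)) = 2*α^2 := by ring
          linarith [t4, t5.le]
      _ = (1 - α*(1-s)) * Mx + (1-α)*α*I + 2*α^2*Q := by ring
  have hfin : 2*α^2*Q = α^2/(η*lcs^2) * (c w)^2 := by
    rw [hQ]; field_simp
  rw [← hfin]
  exact key
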